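/- arXiv:2508.18548 — 8 statements merged into one kernel-verified Lean document; each statement's English description precedes it below -/
import Mathlib

section
/- Let P be a joint probability mass function of (X_j, X_{-j}, Y, S), where X_j takes values in a finite type, X_{-j} in a finite product type, Y in a finite type, and S ∈ {0,1}. Fix a value y of Y and assume that P(X_j = s, X_{-j} = x_{-j}, Y = y) > 0 for every (s, x_{-j}). Assume X_j ⊥ Y | X_{-j} under the marginal law of (X_j, X_{-j}, Y). Define the weight w(s, x_{-j}) = P(S = 1 | X_j = s, X_{-j} = x_{-j}, Y = y), assume Z := Σ_{(s,x_{-j})} P(X_j = s, X_{-j} = x_{-j}) · w(s, x_{-j}) > 0, and define the tilted pmf Q_y(s, x_{-j}) = P(X_j = s, X_{-j} = x_{-j}) · w(s, x_{-j}) / Z. Then for every t and x_{-j} such that P(X_{-j} = x_{-j}, Y = y, S = 1) > 0 and Q_y(X_{-j} = x_{-j}) > 0, one has Q_y(X_j = t | X_{-j} = x_{-j}) = P(X_j = t | X_{-j} = x_{-j}, Y = y, S = 1). -/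
/-! Conditional independence of `X_j` and `Y` given `X_{-j} = x` says that the slice
`P(X_j = s, X_{-j} = x, Y = y)` is the marginal `P(X_j = s, X_{-j} = x)` times a factor `k(x)`
not depending on `s`. The marginal then cancels against the denominator of the weight, so
`Q_y(s, x) = P(X_j = s, X_{-j} = x, Y = y, S = 1) / (k(x) Z)`: as functions of `s`, both sides
of the claim are normalisations of the same vector. -/

open Finset

lemma div_sum_eq_div_sum_of_forall_eq_mul {ι : Type*} [Fintype ι] {f g : ι → ℝ} {c : ℝ}
    (h : ∀ i, f i = g i * c) (hf : ∑ i, f i ≠ 0) (i : ι) :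
    f i / ∑ j, f j = g i / ∑ j, g j := by
  have hsum : ∑ j, f j = (∑ j, g j) * c := by simp only [h, sum_mul]
  have hc : c ≠ 0 := fun hc => hf (by rw [hsum, hc, mul_zero])
  rw [hsum, h, mul_div_mul_right _ _ hc]

lemma eq_rowSum_mul_of_condIndep {α γ : Type*} [Fintype α] [Fintype γ] (J : α → γ → ℝ)
    (hT : ∑ s, ∑ c, J s c ≠ 0)
    (hCI : ∀ t c, J t c / (∑ s, ∑ c, J s c) =
      ((∑ c, J t c) / ∑ s, ∑ c, J s c) * ((∑ s, J s c) / ∑ s, ∑ c, J s c))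
    (t : α) (c : γ) :
    J t c = (∑ c, J t c) * ((∑ s, J s c) / ∑ s, ∑ c, J s c) := by
  have h := hCI t c
  field_simp at h ⊢
  exact h

lemma mul_div_div_eq_mul_inv {m a r k Z : ℝ} (ha : a = m * k) (hr : a = 0 → r = 0) :
    m * (r / a) / Z = r * (k * Z)⁻¹ := by
  by_cases hm : m = 0
  · simp [hm, hr (by rw [ha, hm, zero_mul])]
  · rw [ha, mul_div_assoc', mul_div_mul_left _ _ hm, div_div, div_eq_mul_inv]

theorem tilted_conditional_matches_selected_sample_general
    {𝒳j 𝒳m 𝒴 : Type*} [Fintype 𝒳j] [Fintype 𝒳m] [Fintype 𝒴]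
    -- joint pmf of (X_j, X_{-j}, Y, S), with S : Bool (S = true ↔ selected)
    (P : 𝒳j × 𝒳m × 𝒴 × Bool → ℝ)
    (hPnn : ∀ a, 0 ≤ P a)
    -- the fixed value y of Y
    (y : 𝒴)
    -- conditional independence X_j ⟂ Y | X_{-j} under the marginal law of (X_j, X_{-j}, Y):
    -- P(X_j = t, Y = y' | X_{-j} = x) = P(X_j = t | X_{-j} = x) · P(Y = y' | X_{-j} = x)
    (hCI : ∀ t y' x, 0 < (∑ s, ∑ y'', ∑ b, P (s, x, y'', b)) →
      (∑ b, P (t, x, y', b)) / (∑ s, ∑ y'', ∑ b, P (s, x, y'', b)) =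
        ((∑ y'', ∑ b, P (t, x, y'', b)) / (∑ s, ∑ y'', ∑ b, P (s, x, y'', b))) *
        ((∑ s, ∑ b, P (s, x, y', b)) / (∑ s, ∑ y'', ∑ b, P (s, x, y'', b))))
    -- the weight w(s, x) = P(S = 1 | X_j = s, X_{-j} = x, Y = y)
    (w : 𝒳j → 𝒳m → ℝ)
    (hw : ∀ s x, w s x = P (s, x, y, true) / ∑ b, P (s, x, y, b))
    -- the normalizing constant Z = Σ P(X_j = s, X_{-j} = x) · w(s, x) > 0
    (Z : ℝ)
    -- the tilted pmf Q_y(s, x) = P(X_j = s, X_{-j} = x) · w(s, x) / Z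
    (Q : 𝒳j → 𝒳m → ℝ)
    (hQ : ∀ s x, Q s x = (∑ y'', ∑ b, P (s, x, y'', b)) * w s x / Z) :
    -- conclusion: Q_y(X_j = t | X_{-j} = x) = P(X_j = t | X_{-j} = x, Y = y, S = 1)
    ∀ t x, 0 < (∑ s, P (s, x, y, true)) → 0 < (∑ s, Q s x) →
      Q t x / (∑ s, Q s x) = P (t, x, y, true) / (∑ s, P (s, x, y, true)) := by
  intro t x hsel hQpos
  have hsel_le : ∀ s, P (s, x, y, true) ≤ ∑ b, P (s, x, y, b) :=
    fun s => single_le_sum (f := fun b => P (s, x, y, b)) (fun b _ => hPnn _) (mem_univ true)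
  have hT : 0 < ∑ s, ∑ y'', ∑ b, P (s, x, y'', b) :=
    hsel.trans_le (sum_le_sum fun s _ => (hsel_le s).trans
      (single_le_sum (f := fun y'' => ∑ b, P (s, x, y'', b))
        (fun y'' _ => sum_nonneg fun b _ => hPnn _) (mem_univ y)))
  have hslice := eq_rowSum_mul_of_condIndep (fun s y' => ∑ b, P (s, x, y', b)) hT.ne'
    (fun t y' => hCI t y' x hT)
  have hQ_sel : ∀ s, Q s x = P (s, x, y, true) *
      ((∑ s, ∑ b, P (s, x, y, b)) / (∑ s, ∑ y'', ∑ b, P (s, x, y'', b)) * Z)⁻¹ := by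
    intro s
    rw [hQ, hw]
    exact mul_div_div_eq_mul_inv (hslice s y)
      fun h => le_antisymm (h ▸ hsel_le s) (hPnn _)
  exact div_sum_eq_div_sum_of_forall_eq_mul hQ_sel hQpos.ne' t

/-- **Theorem 1 (discrete form).** Tilting the population covariate distribution by the
selection probability `P(S = 1 | X, Y = y)` reproduces the conditional distribution of a null
coordinate given the others in the selected sample `L(X, Y) = P(X, Y | S = 1)`. -/
theorem tilted_conditional_matches_selected_sample
    {𝒳j 𝒳m 𝒴 : Type*} [Fintype 𝒳j] [Fintype 𝒳m] [Fintype 𝒴]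
    [Nonempty 𝒳j] [Nonempty 𝒳m] [Nonempty 𝒴]
    -- joint pmf of (X_j, X_{-j}, Y, S), with S : Bool (S = true ↔ selected)
    (P : 𝒳j × 𝒳m × 𝒴 × Bool → ℝ)
    (hPnn : ∀ a, 0 ≤ P a)
    (hPsum : ∑ a, P a = 1)
    -- the fixed value y of Y
    (y : 𝒴)
    -- P(X_j = s, X_{-j} = x, Y = y) > 0 for every (s, x)
    (hpos : ∀ s x, 0 < ∑ b, P (s, x, y, b))
    -- conditional independence X_j ⟂ Y | X_{-j} under the marginal law of (X_j, X_{-j}, Y):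
    -- P(X_j = t, Y = y' | X_{-j} = x) = P(X_j = t | X_{-j} = x) · P(Y = y' | X_{-j} = x)
    (hCI : ∀ t y' x, 0 < (∑ s, ∑ y'', ∑ b, P (s, x, y'', b)) →
      (∑ b, P (t, x, y', b)) / (∑ s, ∑ y'', ∑ b, P (s, x, y'', b)) =
        ((∑ y'', ∑ b, P (t, x, y'', b)) / (∑ s, ∑ y'', ∑ b, P (s, x, y'', b))) *
        ((∑ s, ∑ b, P (s, x, y', b)) / (∑ s, ∑ y'', ∑ b, P (s, x, y'', b))))
    -- the weight w(s, x) = P(S = 1 | X_j = s, X_{-j} = x, Y = y)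
    (w : 𝒳j → 𝒳m → ℝ)
    (hw : ∀ s x, w s x = P (s, x, y, true) / ∑ b, P (s, x, y, b))
    -- the normalizing constant Z = Σ P(X_j = s, X_{-j} = x) · w(s, x) > 0
    (Z : ℝ)
    (hZ : Z = ∑ s, ∑ x, (∑ y'', ∑ b, P (s, x, y'', b)) * w s x)
    (hZpos : 0 < Z)
    -- the tilted pmf Q_y(s, x) = P(X_j = s, X_{-j} = x) · w(s, x) / Z
    (Q : 𝒳j → 𝒳m → ℝ)
    (hQ : ∀ s x, Q s x = (∑ y'', ∑ b, P (s, x, y'', b)) * w s x / Z) :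
    -- conclusion: Q_y(X_j = t | X_{-j} = x) = P(X_j = t | X_{-j} = x, Y = y, S = 1)
    ∀ t x, 0 < (∑ s, P (s, x, y, true)) → 0 < (∑ s, Q s x) →
      Q t x / (∑ s, Q s x) = P (t, x, y, true) / (∑ s, P (s, x, y, true)) :=
  tilted_conditional_matches_selected_sample_general P hPnn y hCI w hw Z Q hQ
end

section
/- Let L be a joint pmf of (X_j, X_{-j}, Y) with X_j in a finite type 𝒳_j, X_{-j} in a finite product type, and Y in a finite type. Fix y with L(Y = y) > 0 and fix the coordinate j. Let Q be a pmf on the covariate space 𝒳_j × 𝒳_{-j}, and for each x with Q(x) > 0 let Q̃(· | x) be a conditional pmf on the same covariate space (the knockoff values); assume Q(x) > 0 whenever L(X = x | Y = y) > 0. Assume: (i) conditional matching on coordinate j: for all t and x_{-j} with Q(X_{-j} = x_{-j}) > 0 and L(X_{-j} = x_{-j} | Y = y) > 0, Q(X_j = t | X_{-j} = x_{-j}) = L(X_j = t | X_{-j} = x_{-j}, Y = y); (ii) pairwise exchangeability of Q̃ with respect to Q at coordinate j: for all a, b ∈ 𝒳_j, all x_{-j}, and all x̃_{-j}, Q((a,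 x_{-j})) · Q̃((b, x̃_{-j}) | (a, x_{-j})) = Q((b, x_{-j})) · Q̃((a, x̃_{-j}) | (b, x_{-j})). Then for all a, b ∈ 𝒳_j, all x_{-j}, and all x̃_{-j}: L(X = (a, x_{-j}) | Y = y) · Q̃((b, x̃_{-j}) | (a, x_{-j})) = L(X = (b, x_{-j}) | Y = y) · Q̃((a, x̃_{-j}) | (b, x_{-j})); that is, the conditional joint law of (X, X̃) given Y = y, where X̃ is drawn from Q̃(· | X), is invariant under swapping the j-th original coordinate with the j-th knockoff coordinate. -/
open scoped Classical

/-- **Lemma 2 (discrete form).** If a surrogate distribution `Q` matches the sample conditional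
distribution `L(X_j | X_{-j}, Y = y)` at a null coordinate `j`, and knockoffs are generated
pairwise exchangeably with respect to `Q`, then the pair `(X, X̃)` satisfies the
conditional-on-`Y` exchangeability condition at coordinate `j`. -/
theorem knockoff_conditional_exchangeability
    {𝒳j 𝒳m 𝒴 : Type*} [Fintype 𝒳j] [Fintype 𝒳m] [Fintype 𝒴]
    [Nonempty 𝒳j] [Nonempty 𝒳m] [Nonempty 𝒴]
    -- joint pmf of (X_j, X_{-j}, Y)
    (L : 𝒳j × 𝒳m × 𝒴 → ℝ)
    (hLnn : ∀ a, 0 ≤ L a)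
    (hLsum : ∑ a, L a = 1)
    -- the fixed value y of Y, with L(Y = y) > 0
    (y : 𝒴)
    (hy : 0 < ∑ t, ∑ x, L (t, x, y))
    -- a pmf Q on the covariate space
    (Q : 𝒳j × 𝒳m → ℝ)
    (hQnn : ∀ x, 0 ≤ Q x)
    (hQsum : ∑ x, Q x = 1)
    -- the knockoff-sampling conditional pmf Q̃(· | x), defined (as a pmf) whenever Q(x) > 0
    (Qt : 𝒳j × 𝒳m → 𝒳j × 𝒳m → ℝ)
    (hQtnn : ∀ x x', 0 ≤ Qt x x')
    (hQtsum : ∀ x, 0 < Q x → ∑ x', Qt x x' = 1)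
    -- Q(x) > 0 whenever L(X = x | Y = y) > 0
    (hsupp : ∀ t x, 0 < L (t, x, y) / (∑ t', ∑ x', L (t', x', y)) → 0 < Q (t, x))
    -- (i) conditional matching on coordinate j:
    -- Q(X_j = t | X_{-j} = x) = L(X_j = t | X_{-j} = x, Y = y)
    (hmatch : ∀ t x, 0 < (∑ s, Q (s, x)) →
      0 < (∑ s, L (s, x, y)) / (∑ t', ∑ x', L (t', x', y)) →
      Q (t, x) / (∑ s, Q (s, x)) = L (t, x, y) / (∑ s, L (s, x, y)))
    -- (ii) pairwise exchangeability of Q̃ w.r.t. Q at coordinate j: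
    -- Q((a,x)) Q̃((b,x̃) | (a,x)) = Q((b,x)) Q̃((a,x̃) | (b,x))
    (hexch : ∀ (a b : 𝒳j) (x : 𝒳m) (xt : 𝒳m),
      Q (a, x) * Qt (a, x) (b, xt) = Q (b, x) * Qt (b, x) (a, xt)) :
    -- conclusion:
    -- L(X = (a,x) | Y = y) Q̃((b,x̃) | (a,x)) = L(X = (b,x) | Y = y) Q̃((a,x̃) | (b,x))
    ∀ (a b : 𝒳j) (x : 𝒳m) (xt : 𝒳m),
      (L (a, x, y) / (∑ t', ∑ x', L (t', x', y))) * Qt (a, x) (b, xt) =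
        (L (b, x, y) / (∑ t', ∑ x', L (t', x', y))) * Qt (b, x) (a, xt) := by
  intro a b x xt
  set S := ∑ t', ∑ x', L (t', x', y) with hS
  by_cases hx : 0 < ∑ s, L (s, x, y)
  · -- sum of Q over coordinate is positive
    have hQx : 0 < ∑ s, Q (s, x) := by
      obtain ⟨t, ht⟩ : ∃ t, 0 < L (t, x, y) := by
        by_contra h
        push_neg at h
        have : ∑ s, L (s, x, y) = 0 := Finset.sum_eq_zero fun s _ =>
          le_antisymm (h s) (hLnn _)
        simp [this] at hx
      have hQt : 0 < Q (t, x) := hsupp t x (div_pos ht hy)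
      exact lt_of_lt_of_le hQt (Finset.single_le_sum (f := fun s => Q (s, x)) (fun s _ => hQnn _) (Finset.mem_univ t))
    have hratio : 0 < (∑ s, L (s, x, y)) / S := div_pos hx hy
    have ha := hmatch a x hQx hratio
    have hb := hmatch b x hQx hratio
    -- L (t,x,y)/S = (∑ L / (S * ∑ Q)) * Q(t,x)
    have key : ∀ t, L (t, x, y) / S = ((∑ s, L (s, x, y)) / (S * ∑ s, Q (s, x))) * Q (t, x) := by
      intro t
      have := hmatch t x hQx hratio
      field_simp at this ⊢
      nlinarith [this, hy.le, mul_le_mul_of_nonneg_right (le_of_eq this) hy.le]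
    rw [key a, key b, mul_assoc, mul_assoc, hexch a b x xt]
  · push_neg at hx
    have hall : ∀ s, L (s, x, y) = 0 := by
      intro s
      have h0 : ∑ s, L (s, x, y) = 0 :=
        le_antisymm hx (Finset.sum_nonneg fun s _ => hLnn _)
      have := (Finset.sum_eq_zero_iff_of_nonneg (fun s _ => hLnn (s, x, y))).mp h0
      exact this s (Finset.mem_univ s)
    simp [hall]
end

section
/- Let P be a joint pmf of (X_j, X_{-j}, Y, D), where X_j takes values in a finite type, X_{-j} in a finite product type, Y in a finite type, and D ∈ {0,1} is a case-control status. Fix a value y of Y and d ∈ {0,1}, and assume P(X_j = s, X_{-j} = x_{-j}, Y = y) > 0 for every (s, x_{-j}). Assume X_j ⊥ Y | X_{-j} under the marginal law of (X_j, X_{-j}, Y). Define w(s, x_{-j}) = P(D = d | X_j = s, X_{-j} = x_{-j}, Y = y), assume Z := Σ_{(s,x_{-j})} P(X_j = s, X_{-j} = x_{-j}) · w(s, x_{-j}) > 0, and define the tilted pmf Q_{y,d}(s, x_{-j}) = P(X_j = s, X_{-j} = x_{-j}) · w(s, x_{-j}) / Z. Then for every t and x_{-j} with P(X_{-j} = x_{-j},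 Y = y, D = d) > 0 and Q_{y,d}(X_{-j} = x_{-j}) > 0, one has Q_{y,d}(X_j = t | X_{-j} = x_{-j}) = P(X_j = t | X_{-j} = x_{-j}, Y = y, D = d). -/
open scoped Classical

/-- **Proposition 1 (conditional-pmf identity, discrete form).** In a case-control study with
diagnosis `D` and secondary phenotype `Y`, tilting the population covariate distribution by
`P(D = d | X, Y = y)` reproduces, at a null coordinate, the conditional distribution of `X_j`
given `X_{-j}` within stratum `(Y = y, D = d)` of the case-control sample. -/
theorem tilted_conditional_matches_case_control_stratum
    {𝒳j 𝒳m 𝒴 : Type*} [Fintype 𝒳j] [Fintype 𝒳m] [Fintype 𝒴]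
    [Nonempty 𝒳j] [Nonempty 𝒳m] [Nonempty 𝒴]
    -- joint pmf of (X_j, X_{-j}, Y, D), with D : Bool the case-control status
    (P : 𝒳j × 𝒳m × 𝒴 × Bool → ℝ)
    (hPnn : ∀ a, 0 ≤ P a)
    (hPsum : ∑ a, P a = 1)
    -- the fixed value y of Y and the fixed case-control status d
    (y : 𝒴) (d : Bool)
    -- P(X_j = s, X_{-j} = x, Y = y) > 0 for every (s, x)
    (hpos : ∀ s x, 0 < ∑ b, P (s, x, y, b))
    -- conditional independence X_j ⟂ Y | X_{-j} under the marginal law of (X_j, X_{-j}, Y):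
    -- P(X_j = t, Y = y' | X_{-j} = x) = P(X_j = t | X_{-j} = x) · P(Y = y' | X_{-j} = x)
    (hCI : ∀ t y' x, 0 < (∑ s, ∑ y'', ∑ b, P (s, x, y'', b)) →
      (∑ b, P (t, x, y', b)) / (∑ s, ∑ y'', ∑ b, P (s, x, y'', b)) =
        ((∑ y'', ∑ b, P (t, x, y'', b)) / (∑ s, ∑ y'', ∑ b, P (s, x, y'', b))) *
        ((∑ s, ∑ b, P (s, x, y', b)) / (∑ s, ∑ y'', ∑ b, P (s, x, y'', b))))
    -- the weight w(s, x) = P(D = d | X_j = s, X_{-j} = x, Y = y)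
    (w : 𝒳j → 𝒳m → ℝ)
    (hw : ∀ s x, w s x = P (s, x, y, d) / ∑ b, P (s, x, y, b))
    -- the normalizing constant Z = Σ P(X_j = s, X_{-j} = x) · w(s, x) > 0
    (Z : ℝ)
    (hZ : Z = ∑ s, ∑ x, (∑ y'', ∑ b, P (s, x, y'', b)) * w s x)
    (hZpos : 0 < Z)
    -- the tilted pmf Q_{y,d}(s, x) = P(X_j = s, X_{-j} = x) · w(s, x) / Z
    (Q : 𝒳j → 𝒳m → ℝ)
    (hQ : ∀ s x, Q s x = (∑ y'', ∑ b, P (s, x, y'', b)) * w s x / Z) :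
    -- conclusion: Q_{y,d}(X_j = t | X_{-j} = x) = P(X_j = t | X_{-j} = x, Y = y, D = d)
    ∀ t x, 0 < (∑ s, P (s, x, y, d)) → 0 < (∑ s, Q s x) →
      Q t x / (∑ s, Q s x) = P (t, x, y, d) / (∑ s, P (s, x, y, d)) := by
  intro t x hPd hQpos
  have hNpos : ∀ s, 0 < ∑ b, P (s, x, y, b) := fun s => hpos s x
  set T := ∑ s, ∑ y'', ∑ b, P (s, x, y'', b) with hT
  set S := ∑ s, ∑ b, P (s, x, y, b) with hS
  have hSpos : 0 < S := Finset.sum_pos (fun s _ => hNpos s) Finset.univ_nonempty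
  have hMpos : ∀ s, 0 < ∑ y'', ∑ b, P (s, x, y'', b) := by
    intro s
    have h1 : (∑ b, P (s, x, y, b)) ≤ ∑ y'', ∑ b, P (s, x, y'', b) :=
      Finset.single_le_sum (f := fun y'' => ∑ b, P (s, x, y'', b))
        (fun y'' _ => Finset.sum_nonneg fun b _ => hPnn _) (Finset.mem_univ y)
    exact lt_of_lt_of_le (hNpos s) h1
  have hTpos : 0 < T := Finset.sum_pos (fun s _ => hMpos s) Finset.univ_nonempty
  have key : ∀ s, Q s x = (T / (S * Z)) * P (s, x, y, d) := by
    intro s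
    have hT' : T ≠ 0 := hTpos.ne'
    have hS' : S ≠ 0 := hSpos.ne'
    have hZ' : Z ≠ 0 := hZpos.ne'
    have hN : (∑ b, P (s, x, y, b)) ≠ 0 := (hNpos s).ne'
    have hCIs := hCI s y x hTpos
    rw [div_mul_div_comm, div_eq_div_iff hT' (mul_ne_zero hT' hT')] at hCIs
    have hM : (∑ y'', ∑ b, P (s, x, y'', b)) * S = (∑ b, P (s, x, y, b)) * T :=
      mul_right_cancel₀ hT' (by linear_combination -hCIs)
    rw [hQ, hw, mul_div_assoc', div_div, div_mul_eq_mul_div,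
      div_eq_div_iff (mul_ne_zero hN hZ') (mul_ne_zero hS' hZ')]
    linear_combination P (s, x, y, d) * Z * hM
  have hsum : (∑ s, Q s x) = (T / (S * Z)) * ∑ s, P (s, x, y, d) := by
    rw [Finset.mul_sum]
    exact Finset.sum_congr rfl fun s _ => key s
  rw [key t, hsum]
  have hc : (T / (S * Z)) ≠ 0 := by positivity
  rw [mul_div_mul_left _ _ hc]
end

section
/- Let K ≥ 1 and let T_0, T_1, …, T_K be real-valued random variables on a probability space whose joint distribution is exchangeable, i.e., for every permutation σ of {0, 1, …, K}, the vector (T_{σ(0)}, …, T_{σ(K)}) has the same joint distribution as (T_0, …, T_K). Define the random variable P = (1 + #{k ∈ {1, …, K} : T_k ≥ T_0}) / (K + 1). Then for every α ∈ [0, 1], Prob(P ≤ α) ≤ α; that is, P is stochastically larger than a uniform random variable on [0,1]. -/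
/-!
Let `r i` be the number of indices `k` with `T i ≤ T k`, so that `P = r 0 / (K + 1)`. For any
vector, at most `j` indices have rank `r i ≤ j`: the one among them with the smallest entry has
all of them above it. By exchangeability the events `{r i ≤ j}` all have the probability of
`{r 0 ≤ j}`, hence `(K + 1) Prob(r 0 ≤ j) = E #{i | r i ≤ j} ≤ j`; take `j = ⌊(K + 1) α⌋`.
-/

open MeasureTheory Finset
open scoped ENNReal

section

variable {ι : Type*} [Fintype ι]

section Rank

variable {α : Type*} [LinearOrder α]

def upperRank (x : ι → α) (i : ι) : ℕ := #{k | x i ≤ x k}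

theorem upperRank_eq_card_ne_add_one [DecidableEq ι] (x : ι → α) (i : ι) :
    upperRank x i = #{k | k ≠ i ∧ x i ≤ x k} + 1 := by
  rw [upperRank, ← card_insert_of_notMem (s := {k | k ≠ i ∧ x i ≤ x k}) (a := i) (by simp)]
  congr 1
  ext k
  by_cases hk : k = i <;> simp [hk]

theorem upperRank_comp_perm (x : ι → α) (σ : Equiv.Perm ι) (i : ι) :
    upperRank (x ∘ σ) i = upperRank x (σ i) :=
  card_equiv σ (by simp)

theorem card_upperRank_le (x : ι → α) (j : ℕ) : #{i | upperRank x i ≤ j} ≤ j := by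
  rcases (univ.filter fun i => upperRank x i ≤ j).eq_empty_or_nonempty with hS | hS
  · simp [hS]
  · obtain ⟨i₀, hi₀, hmin⟩ := exists_min_image _ x hS
    calc #{i | upperRank x i ≤ j} ≤ upperRank x i₀ :=
        card_le_card fun k hk => by simpa using hmin k hk
      _ ≤ j := (mem_filter.1 hi₀).2

theorem measurable_upperRank (i : ι) : Measurable fun x : ι → ℝ => upperRank x i := by
  simp only [upperRank, card_filter]
  exact Finset.measurable_sum _ fun k _ =>
    Measurable.ite (measurableSet_le (measurable_pi_apply i) (measurable_pi_apply k))
      measurable_const measurable_const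

end Rank

section Measure

variable {Ω : Type*} [MeasurableSpace Ω] (μ : Measure Ω)

theorem sum_measure_le_of_forall_card_mem_le {E : ι → Set Ω} (hE : ∀ i, MeasurableSet (E i))
    [∀ i, DecidablePred (· ∈ E i)] {j : ℕ} (hj : ∀ ω, #{i | ω ∈ E i} ≤ j) :
    ∑ i, μ (E i) ≤ j * μ Set.univ := by
  have hcount (ω : Ω) : ∑ i, (E i).indicator 1 ω = (#{i | ω ∈ E i} : ℝ≥0∞) := by
    simp only [Set.indicator_apply, Pi.one_apply, sum_boole]
  calc ∑ i, μ (E i) = ∫⁻ ω, ∑ i, (E i).indicator 1 ω ∂μ := by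
        rw [lintegral_finsetSum _ fun i _ => measurable_one.indicator (hE i)]
        simp only [lintegral_indicator_one (hE _)]
    _ ≤ ∫⁻ _, (j : ℝ≥0∞) ∂μ :=
        lintegral_mono fun ω => (hcount ω).trans_le (Nat.cast_le.mpr (hj ω))
    _ = j * μ Set.univ := lintegral_const _

end Measure

section Exchangeable

def Exchangeable {Ω β : Type*} [MeasurableSpace Ω] [MeasurableSpace β] (μ : Measure Ω)
    (X : Ω → ι → β) : Prop :=
  ∀ σ : Equiv.Perm ι, μ.map (fun ω => X ω ∘ σ) = μ.map X

variable {Ω : Type*} [MeasurableSpace Ω] {μ : Measure Ω} {X : Ω → ι → ℝ}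

theorem measure_upperRank_le_eq [DecidableEq ι] (hX : Measurable X)
    (hexch : Exchangeable μ X) (i₀ i : ι) (j : ℕ) :
    μ {ω | upperRank (X ω) i ≤ j} = μ {ω | upperRank (X ω) i₀ ≤ j} := by
  have hA : MeasurableSet {x : ι → ℝ | upperRank x i₀ ≤ j} :=
    measurable_upperRank i₀ measurableSet_Iic
  have hXσ : Measurable fun ω => X ω ∘ Equiv.swap i₀ i :=
    measurable_pi_lambda _ fun k => measurable_pi_apply _ |>.comp hX
  have := congrArg (· {x | upperRank x i₀ ≤ j}) (hexch (Equiv.swap i₀ i))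
  simp only [Measure.map_apply hXσ hA, Measure.map_apply hX hA] at this
  simpa [Set.preimage, upperRank_comp_perm] using this

theorem card_mul_measure_upperRank_le_le [DecidableEq ι] [IsProbabilityMeasure μ]
    (hX : Measurable X) (hexch : Exchangeable μ X) (i₀ : ι) (j : ℕ) :
    Fintype.card ι * μ {ω | upperRank (X ω) i₀ ≤ j} ≤ j := by
  have hE (i : ι) : MeasurableSet {ω | upperRank (X ω) i ≤ j} :=
    (measurable_upperRank i).comp hX measurableSet_Iic
  calc Fintype.card ι * μ {ω | upperRank (X ω) i₀ ≤ j}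
      = ∑ i, μ {ω | upperRank (X ω) i ≤ j} := by
        simp [measure_upperRank_le_eq hX hexch i₀]
    _ ≤ j * μ Set.univ :=
        sum_measure_le_of_forall_card_mem_le μ hE fun ω => card_upperRank_le (X ω) j
    _ = j := by simp

theorem measure_upperRank_le_card_mul_le [DecidableEq ι] [IsProbabilityMeasure μ]
    (hX : Measurable X) (hexch : Exchangeable μ X) (i₀ : ι) {a : ℝ} (ha : 0 ≤ a) :
    μ {ω | (upperRank (X ω) i₀ : ℝ) ≤ Fintype.card ι * a} ≤ ENNReal.ofReal a := by
  have hn : 0 < Fintype.card ι := Fintype.card_pos_iff.2 ⟨i₀⟩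
  have hna : 0 ≤ (Fintype.card ι : ℝ) * a := by positivity
  have hevent : {ω | (upperRank (X ω) i₀ : ℝ) ≤ Fintype.card ι * a}
      = {ω | upperRank (X ω) i₀ ≤ ⌊(Fintype.card ι : ℝ) * a⌋₊} := by
    ext ω
    simp only [Set.mem_ofPred_eq, Nat.le_floor_iff hna]
  rw [hevent, ← ENNReal.mul_le_mul_iff_right (a := Fintype.card ι) (by simp [hn.ne']) (by simp)]
  calc (Fintype.card ι : ℝ≥0∞) *
        μ {ω | upperRank (X ω) i₀ ≤ ⌊(Fintype.card ι : ℝ) * a⌋₊}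
      ≤ ⌊(Fintype.card ι : ℝ) * a⌋₊ := card_mul_measure_upperRank_le_le hX hexch i₀ _
    _ ≤ ENNReal.ofReal (Fintype.card ι * a) := by
        rw [← ENNReal.ofReal_natCast]; exact ENNReal.ofReal_le_ofReal (Nat.floor_le hna)
    _ = Fintype.card ι * ENNReal.ofReal a := by
        rw [ENNReal.ofReal_mul (Nat.cast_nonneg _), ENNReal.ofReal_natCast]

end Exchangeable

end

theorem exchangeable_rank_pvalue_superuniform_general
    {Ω : Type*} [MeasurableSpace Ω] (μ : Measure Ω) [IsProbabilityMeasure μ]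
    (K : ℕ)
    (T : Fin (K + 1) → Ω → ℝ)
    (hTmeas : ∀ k, Measurable (T k))
    -- exchangeability: for every permutation σ of {0, 1, …, K}, the vector
    -- (T_{σ(0)}, …, T_{σ(K)}) has the same joint distribution as (T_0, …, T_K)
    (hexch : ∀ σ : Equiv.Perm (Fin (K + 1)),
      Measure.map (fun ω (i : Fin (K + 1)) => T (σ i) ω) μ =
        Measure.map (fun ω (i : Fin (K + 1)) => T i ω) μ)
    -- the p-value P = (1 + #{k ∈ {1, …, K} : T_k ≥ T_0}) / (K + 1)
    (P : Ω → ℝ)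
    (hP : ∀ ω, P ω = (1 + ((Finset.univ.filter
        (fun k : Fin (K + 1) => k ≠ 0 ∧ T 0 ω ≤ T k ω)).card : ℝ)) / (K + 1)) :
    ∀ α : ℝ, 0 ≤ α → α ≤ 1 → μ {ω | P ω ≤ α} ≤ ENNReal.ofReal α := by
  intro α hα _
  have hevent : {ω | P ω ≤ α}
      = {ω | (upperRank (fun i => T i ω) 0 : ℝ) ≤ Fintype.card (Fin (K + 1)) * α} := by
    ext ω
    rw [Set.mem_ofPred_eq, Set.mem_ofPred_eq, hP, upperRank_eq_card_ne_add_one, Fintype.card_fin,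
      div_le_iff₀ (by positivity)]
    push_cast
    rw [add_comm (1 : ℝ), mul_comm α]
  rw [hevent]
  exact measure_upperRank_le_card_mul_le (measurable_pi_lambda _ hTmeas) hexch 0 hα

/-- **Rank-based p-value validity (Proposition 2's core lemma).** If `T_0, T_1, …, T_K` are
exchangeable real-valued random variables, then the p-value
`P = (1 + #{k ∈ {1,…,K} : T_k ≥ T_0}) / (K + 1)` is super-uniform:
`Prob(P ≤ α) ≤ α` for every `α ∈ [0, 1]`. -/
theorem exchangeable_rank_pvalue_superuniform
    {Ω : Type*} [MeasurableSpace Ω] (μ : Measure Ω) [IsProbabilityMeasure μ]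
    (K : ℕ) (hK : 1 ≤ K)
    (T : Fin (K + 1) → Ω → ℝ)
    (hTmeas : ∀ k, Measurable (T k))
    -- exchangeability: for every permutation σ of {0, 1, …, K}, the vector
    -- (T_{σ(0)}, …, T_{σ(K)}) has the same joint distribution as (T_0, …, T_K)
    (hexch : ∀ σ : Equiv.Perm (Fin (K + 1)),
      Measure.map (fun ω (i : Fin (K + 1)) => T (σ i) ω) μ =
        Measure.map (fun ω (i : Fin (K + 1)) => T i ω) μ)
    -- the p-value P = (1 + #{k ∈ {1, …, K} : T_k ≥ T_0}) / (K + 1)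
    (P : Ω → ℝ)
    (hP : ∀ ω, P ω = (1 + ((Finset.univ.filter
        (fun k : Fin (K + 1) => k ≠ 0 ∧ T 0 ω ≤ T k ω)).card : ℝ)) / (K + 1)) :
    ∀ α : ℝ, 0 ≤ α → α ≤ 1 → μ {ω | P ω ≤ α} ≤ ENNReal.ofReal α :=
  exchangeable_rank_pvalue_superuniform_general μ K T hTmeas hexch P hP
end

section
/- Let P be a joint pmf of (X_j, X_{-j}, Y, S), where X_j, X_{-j}, Y take values in finite types and S ∈ {0,1}, with P(S = 1) > 0. Assume: (i) X_j ⊥ Y | X_{-j} under the marginal law of (X_j, X_{-j}, Y); and (ii) S ⊥ Y | (X_j, X_{-j}) under P, i.e., for all s, y, x with P(X = x) > 0, P(S = s, Y = y | X = x) = P(S = s | X = x) · P(Y = y | X = x), where X = (X_j, X_{-j}). Then X_j ⊥ Y | X_{-j} holds under the selected-sample distribution L(·) = P(· | S = 1): for all t, y, x_{-j} with P(X_{-j} = x_{-j}, S = 1) > 0, L(X_j = t, Y = y | X_{-j} = x_{-j}) = L(X_j = t | X_{-j} = x_{-j}) · L(Y = y | X_{-j} = x_{-j}). -/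
open scoped Classical

/-- **Selection ignorable given covariates preserves conditional nulls (Section 1.1).**
If `S ⟂ Y | X` under `P`, then a conditional null `X_j ⟂ Y | X_{-j}` under the population `P`
remains a conditional null under the selected-sample distribution `L(·) = P(· | S = 1)`. -/
theorem null_preserved_under_outcome_independent_selection
    {𝒳j 𝒳m 𝒴 : Type*} [Fintype 𝒳j] [Fintype 𝒳m] [Fintype 𝒴]
    [Nonempty 𝒳j] [Nonempty 𝒳m] [Nonempty 𝒴]
    -- joint pmf of (X_j, X_{-j}, Y, S), with S : Bool (S = true ↔ selected)
    (P : 𝒳j × 𝒳m × 𝒴 × Bool → ℝ)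
    (hPnn : ∀ a, 0 ≤ P a)
    (hPsum : ∑ a, P a = 1)
    -- P(S = 1) > 0
    (hS1 : 0 < ∑ t, ∑ x, ∑ y, P (t, x, y, true))
    -- (i) X_j ⟂ Y | X_{-j} under the marginal law of (X_j, X_{-j}, Y)
    (hCI : ∀ t y x, 0 < (∑ s, ∑ y', ∑ b, P (s, x, y', b)) →
      (∑ b, P (t, x, y, b)) / (∑ s, ∑ y', ∑ b, P (s, x, y', b)) =
        ((∑ y', ∑ b, P (t, x, y', b)) / (∑ s, ∑ y', ∑ b, P (s, x, y', b))) *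
        ((∑ s, ∑ b, P (s, x, y, b)) / (∑ s, ∑ y', ∑ b, P (s, x, y', b))))
    -- (ii) S ⟂ Y | (X_j, X_{-j}) under P:
    -- P(S = b, Y = y | X = (t, x)) = P(S = b | X = (t, x)) · P(Y = y | X = (t, x))
    (hSY : ∀ (b : Bool) (y : 𝒴) (t : 𝒳j) (x : 𝒳m), 0 < (∑ y', ∑ b', P (t, x, y', b')) →
      P (t, x, y, b) / (∑ y', ∑ b', P (t, x, y', b')) =
        ((∑ y', P (t, x, y', b)) / (∑ y', ∑ b', P (t, x, y', b'))) *
        ((∑ b', P (t, x, y, b')) / (∑ y', ∑ b', P (t, x, y', b')))) :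
    -- conclusion: X_j ⟂ Y | X_{-j} under L(·) = P(· | S = 1); writing
    -- L(t, x, y) = P(t, x, y, S = 1) / P(S = 1), for all t, y, x with P(X_{-j} = x, S = 1) > 0,
    -- L(X_j = t, Y = y | X_{-j} = x) = L(X_j = t | X_{-j} = x) · L(Y = y | X_{-j} = x)
    ∀ (t : 𝒳j) (y : 𝒴) (x : 𝒳m), 0 < (∑ s, ∑ y', P (s, x, y', true)) →
      (P (t, x, y, true) / (∑ t', ∑ x', ∑ y', P (t', x', y', true))) /
          ((∑ s, ∑ y', P (s, x, y', true)) / (∑ t', ∑ x', ∑ y', P (t', x', y', true))) =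
        ((∑ y', P (t, x, y', true)) / (∑ t', ∑ x', ∑ y', P (t', x', y', true))) /
            ((∑ s, ∑ y', P (s, x, y', true)) / (∑ t', ∑ x', ∑ y', P (t', x', y', true))) *
        (((∑ s, P (s, x, y, true)) / (∑ t', ∑ x', ∑ y', P (t', x', y', true))) /
            ((∑ s, ∑ y', P (s, x, y', true)) / (∑ t', ∑ x', ∑ y', P (t', x', y', true)))) := by

  intro t y x hB
  have hWpos : 0 < ∑ t', ∑ x', ∑ y', P (t', x', y', true) := hS1
  set W := ∑ t', ∑ x', ∑ y', P (t', x', y', true) with hWdef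
  -- abbreviations
  set A : 𝒳j → ℝ := fun s => ∑ y', P (s, x, y', true) with hA
  set M : 𝒳j → ℝ := fun s => ∑ y', ∑ b', P (s, x, y', b') with hM
  set f : 𝒳j → ℝ := fun s => ∑ b, P (s, x, y, b) with hf
  have hAleM : ∀ s, A s ≤ M s := by
    intro s
    apply Finset.sum_le_sum
    intro y' _
    rw [Fintype.sum_bool]
    have := hPnn (s, x, y', false)
    linarith
  have hAnn : ∀ s, 0 ≤ A s := by
    intro s; exact Finset.sum_nonneg fun _ _ => hPnn _
  have hMnn : ∀ s, 0 ≤ M s := fun s => le_trans (hAnn s) (hAleM s)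
  have hBN : (∑ s, A s) ≤ ∑ s, M s := Finset.sum_le_sum fun s _ => hAleM s
  have hNpos : 0 < ∑ s, ∑ y', ∑ b, P (s, x, y', b) := lt_of_lt_of_le hB hBN
  set N := ∑ s, ∑ y', ∑ b, P (s, x, y', b) with hN
  set g := ∑ s, ∑ b, P (s, x, y, b) with hg
  -- pointwise : terms are bounded by M s
  have hPle : ∀ s, P (s, x, y, true) ≤ M s := by
    intro s
    calc P (s, x, y, true) ≤ A s := by
            apply Finset.single_le_sum (fun y' _ => hPnn (s, x, y', true)) (Finset.mem_univ y)
      _ ≤ M s := hAleM s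
  have hfle : ∀ s, f s ≤ M s := by
    intro s
    show (∑ b, P (s, x, y, b)) ≤ M s
    apply Finset.single_le_sum (f := fun y' => ∑ b, P (s, x, y', b))
      (fun y' _ => Finset.sum_nonneg fun _ _ => hPnn _) (Finset.mem_univ y)
  have hfnn : ∀ s, 0 ≤ f s := fun s => Finset.sum_nonneg fun _ _ => hPnn _
  -- key pointwise identity: P(s,x,y,true) * N = A s * g
  have key : ∀ s, P (s, x, y, true) * N = A s * g := by
    intro s
    rcases lt_or_eq_of_le (hMnn s) with hMs | hMs
    · have h2 := hSY true y s x hMs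
      have h1 := hCI s y x hNpos
      have hMne : (M s) ≠ 0 := ne_of_gt hMs
      have hNne : N ≠ 0 := ne_of_gt hNpos
      have e2 : P (s, x, y, true) * M s = A s * f s := by
        rw [div_mul_div_comm, div_eq_div_iff hMne (mul_ne_zero hMne hMne)] at h2
        have h3 : (P (s, x, y, true) * M s) * M s = (A s * f s) * M s := by
          linear_combination h2
        exact mul_right_cancel₀ hMne h3
      have e1 : f s * N = M s * g := by
        rw [div_mul_div_comm, div_eq_div_iff hNne (mul_ne_zero hNne hNne)] at h1
        have h3 : (f s * N) * N = (M s * g) * N := by linear_combination h1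
        exact mul_right_cancel₀ hNne h3
      have : P (s, x, y, true) * N * M s = A s * g * M s := by
        calc P (s, x, y, true) * N * M s = (P (s, x, y, true) * M s) * N := by ring
          _ = A s * f s * N := by rw [e2]
          _ = A s * (f s * N) := by ring
          _ = A s * (M s * g) := by rw [e1]
          _ = A s * g * M s := by ring
      exact mul_right_cancel₀ hMne this
    · have hP0 : P (s, x, y, true) = 0 :=
        le_antisymm (by rw [hMs]; exact hPle s) (hPnn _)
      have hA0 : A s = 0 := le_antisymm (by rw [hMs]; exact hAleM s) (hAnn s)
      rw [hP0, hA0]; ring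
  -- summed identity : (∑ s, P(s,x,y,true)) * N = (∑ s, A s) * g
  have keysum : (∑ s, P (s, x, y, true)) * N = (∑ s, A s) * g := by
    rw [Finset.sum_mul, Finset.sum_mul]
    exact Finset.sum_congr rfl fun s _ => key s
  -- final algebraic identity : p * B = A t * g1
  have hBeq : (∑ s, ∑ y', P (s, x, y', true)) = ∑ s, A s := rfl
  set B := ∑ s, A s with hBdef
  have hBpos : 0 < B := by rw [← hBeq]; exact hB
  set g1 := ∑ s, P (s, x, y, true) with hg1
  have main : P (t, x, y, true) * B = A t * g1 := by
    have h1 : P (t, x, y, true) * N = A t * g := key t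
    have h2 : g1 * N = B * g := keysum
    have : P (t, x, y, true) * B * N = A t * g1 * N := by
      calc P (t, x, y, true) * B * N = (P (t, x, y, true) * N) * B := by ring
        _ = A t * g * B := by rw [h1]
        _ = A t * (B * g) := by ring
        _ = A t * (g1 * N) := by rw [h2]
        _ = A t * g1 * N := by ring
    exact mul_right_cancel₀ (ne_of_gt hNpos) this
  -- conclude
  have hWne : W ≠ 0 := ne_of_gt hWpos
  have hBne : B ≠ 0 := ne_of_gt hBpos
  show (P (t, x, y, true) / W) / (B / W) =
      ((A t / W) / (B / W)) * ((g1 / W) / (B / W))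
  field_simp
  nlinarith [main, mul_pos hBpos hWpos]
end

section
/- Let P be a joint pmf of (X_j, X_{-j}, D), where X_j, X_{-j} take values in finite types and D ∈ {0,1}, with P(D = 0) > 0 and P(D = 1) > 0. Let p_0, p_1 ≥ 0 with p_0 + p_1 = 1, and define the case-control sample pmf L on covariate-status pairs by L(x, d) = p_d · P(X = x | D = d), where X = (X_j, X_{-j}). Then: (i) for every d with p_d > 0 and every x, L(X = x | D = d) = P(X = x | D = d); and (ii) if X_j ⊥ D | X_{-j} under P, then for every d with p_d > 0 and all t, x_{-j} with L(X_{-j} = x_{-j}, D = d) > 0 and P(X_{-j} = x_{-j}) > 0, L(X_j = t | X_{-j} = x_{-j}, D = d) = P(X_j = t | X_{-j} = x_{-j}). -/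
open scoped Classical

/-- **Case-control mixture preserves the conditional law of X given D (Section 2.4).**
For the case-control mixture `L(x, d) = p_d · P(X = x | D = d)`:
(i) `L(X = x | D = d) = P(X = x | D = d)`; and
(ii) if `X_j ⟂ D | X_{-j}` under `P`, then
`L(X_j = t | X_{-j} = x_{-j}, D = d) = P(X_j = t | X_{-j} = x_{-j})`. -/
theorem case_control_mixture_conditional_law
    {𝒳j 𝒳m : Type*} [Fintype 𝒳j] [Fintype 𝒳m] [Nonempty 𝒳j] [Nonempty 𝒳m]
    -- joint pmf of (X_j, X_{-j}, D), with D : Bool the case-control status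
    (P : 𝒳j × 𝒳m × Bool → ℝ)
    (hPnn : ∀ a, 0 ≤ P a)
    (hPsum : ∑ a, P a = 1)
    -- P(D = 0) > 0 and P(D = 1) > 0
    (hD : ∀ d : Bool, 0 < ∑ t, ∑ x, P (t, x, d))
    -- mixture weights p_0, p_1 ≥ 0 with p_0 + p_1 = 1
    (p : Bool → ℝ)
    (hpnn : ∀ d, 0 ≤ p d)
    (hpsum : p false + p true = 1)
    -- the case-control sample pmf L(x, d) = p_d · P(X = x | D = d)
    (L : 𝒳j × 𝒳m × Bool → ℝ)
    (hL : ∀ t x d, L (t, x, d) = p d * (P (t, x, d) / ∑ t', ∑ x', P (t', x', d))) :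
    -- (i) for every d with p_d > 0, L(X = x | D = d) = P(X = x | D = d)
    (∀ d : Bool, 0 < p d → ∀ (t : 𝒳j) (x : 𝒳m),
      L (t, x, d) / (∑ t', ∑ x', L (t', x', d)) =
        P (t, x, d) / (∑ t', ∑ x', P (t', x', d))) ∧
    -- (ii) if X_j ⟂ D | X_{-j} under P …
    ((∀ (t : 𝒳j) (d : Bool) (x : 𝒳m), 0 < (∑ s, ∑ d', P (s, x, d')) →
        P (t, x, d) / (∑ s, ∑ d', P (s, x, d')) =
          ((∑ d', P (t, x, d')) / (∑ s, ∑ d', P (s, x, d'))) *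
          ((∑ s, P (s, x, d)) / (∑ s, ∑ d', P (s, x, d')))) →
      -- … then L(X_j = t | X_{-j} = x, D = d) = P(X_j = t | X_{-j} = x)
      ∀ d : Bool, 0 < p d → ∀ (t : 𝒳j) (x : 𝒳m),
        0 < (∑ s, L (s, x, d)) → 0 < (∑ s, ∑ d', P (s, x, d')) →
        L (t, x, d) / (∑ s, L (s, x, d)) =
          (∑ d', P (t, x, d')) / (∑ s, ∑ d', P (s, x, d'))) := by
  -- total sums over d
  have hLsum : ∀ d : Bool, (∑ t', ∑ x', L (t', x', d)) = p d := by
    intro d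
    have hPD := (hD d).ne'
    have h1 : (∑ t', ∑ x', L (t', x', d)) =
        p d * ((∑ t', ∑ x', P (t', x', d)) / (∑ t', ∑ x', P (t', x', d))) := by
      simp only [hL, ← Finset.mul_sum, ← Finset.sum_div]
    rw [h1, div_self hPD, mul_one]
  constructor
  · intro d hpd t x
    rw [hLsum d, hL t x d, mul_div_assoc, mul_comm, div_mul_cancel₀ _ hpd.ne']
  · intro hCI d hpd t x hLx hPm
    have hPD := hD d
    have hSL : (∑ s, L (s, x, d)) = p d * ((∑ s, P (s, x, d)) / (∑ t', ∑ x', P (t', x', d))) := by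
      simp only [hL, ← Finset.mul_sum, ← Finset.sum_div]
    have hA : 0 < (∑ s, P (s, x, d)) := by
      by_contra h
      push_neg at h
      have h0 : (∑ s, P (s, x, d)) = 0 :=
        le_antisymm h (Finset.sum_nonneg fun s _ => hPnn _)
      rw [hSL, h0] at hLx
      simp at hLx
    have key : L (t, x, d) / (∑ s, L (s, x, d)) = P (t, x, d) / (∑ s, P (s, x, d)) := by
      rw [hSL, hL]
      rw [div_eq_div_iff (by positivity : (p d * ((∑ s, P (s, x, d)) / (∑ t', ∑ x', P (t', x', d)))) ≠ 0) hA.ne']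
      field_simp
    rw [key]
    have hCI' := hCI t d x hPm
    have hPm' := hPm.ne'
    rw [div_mul_div_comm, div_eq_div_iff hPm' (mul_ne_zero hPm' hPm'), ← mul_assoc] at hCI'
    rw [div_eq_div_iff hA.ne' hPm']
    have h2 := mul_right_cancel₀ hPm' hCI'
    linarith [h2]
end

section
/- Let (Ω, ℱ, P) be a probability space, p ≥ 1, W : Ω → (Fin p → ℝ) a random vector, H₀ ⊆ Fin p a set of 'null' indices, and q ∈ (0, 1]. Assume sign-flip symmetry on the nulls: for every ε : Fin p → {−1, +1} with ε_j = +1 for all j ∉ H₀, the random vector (ε_j W_j)_{j} has the same joint distribution as (W_j)_j. Define for each outcome the knockoff+ threshold τ₊ as the smallest element t of the set {|W_j| : j ∈ Fin p, W_j ≠ 0} satisfying (1 + #{j : W_j ≤ −t}) / max(#{j : W_j ≥ t}, 1) ≤ q, declaring no selections if no such t exists; and define the selection set Ŝ = {j : W_j ≥ τ₊} (Ŝ = ∅ when no threshold exists). Then the false discovery rate is controlled: E[ #(Ŝ ∩ H₀) / max(#Ŝ, 1) ] ≤ q. -/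
open scoped Classical

/-- The candidate knockoff+ thresholds: values `t ∈ {|W_j| : W_j ≠ 0}` such that
`(1 + #{j : W_j ≤ −t}) / max(#{j : W_j ≥ t}, 1) ≤ q`. -/
noncomputable def koCandidates {p : ℕ} (q : ℝ) (w : Fin p → ℝ) : Finset ℝ :=
  ((Finset.univ.filter (fun j : Fin p => w j ≠ 0)).image (fun j => |w j|)).filter
    (fun t =>
      (1 + ((Finset.univ.filter (fun j : Fin p => w j ≤ -t)).card : ℝ)) /
        (max ((Finset.univ.filter (fun j : Fin p => t ≤ w j)).card : ℝ) 1) ≤ q)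

/-- The knockoff+ selection set `Ŝ = {j : W_j ≥ τ₊}`, where `τ₊` is the smallest candidate
threshold; no selections are made if no candidate threshold exists. -/
noncomputable def koSelect {p : ℕ} (q : ℝ) (w : Fin p → ℝ) : Finset (Fin p) :=
  if h : (koCandidates q w).Nonempty then
    Finset.univ.filter (fun j : Fin p => (koCandidates q w).min' h ≤ w j)
  else ∅

/-- The false discovery proportion `#(Ŝ ∩ H₀) / max(#Ŝ, 1)` of the knockoff+ selection. -/
noncomputable def koFDP {p : ℕ} (H0 : Finset (Fin p)) (q : ℝ) (w : Fin p → ℝ) : ℝ :=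
  ((koSelect q w ∩ H0).card : ℝ) / max ((koSelect q w).card : ℝ) 1

/-!
Leave-one-out argument. Let `τⱼ` be the knockoff+ threshold recomputed after replacing `W_j` by
`|W_j|`, and `gⱼ = 1{τⱼ ≤ |W_j|} / (1 + #{k ∈ H₀ ∖ {j} : W_k ≤ -τⱼ})`, which does not depend on
the sign of `W_j`. The definition of `τ₊` gives
`FDP ≤ q · #{j ∈ H₀ : W_j ≥ τ₊} / (1 + #{j ∈ H₀ : W_j ≤ -τ₊}) = q · ∑_{j ∈ H₀} 1{W_j > 0} gⱼ`.
Flipping the sign of a single null `W_j` turns `1{W_j > 0} gⱼ` into `1{W_j < 0} gⱼ` without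
changing the law of `W`, so both have the same mean. Finally `∑_{j ∈ H₀} 1{W_j < 0} gⱼ ≤ 1`
pointwise: all the thresholds `τⱼ` with `W_j ≤ -τⱼ` coincide, so each such `j` sees all the
others among the negatives.
-/

open Finset MeasureTheory ProbabilityTheory Function

section Deterministic

variable {p : ℕ} (H0 : Finset (Fin p)) (q : ℝ)

/-- `τ₊`, with `⊤` standing for "no threshold, no selection". -/
noncomputable def koThreshold (w : Fin p → ℝ) : WithTop ℝ :=
  (koCandidates q w).min

/-- The leave-one-out weight `gⱼ(w)`. -/
noncomputable def koLooWeight (j : Fin p) (w : Fin p → ℝ) : ℝ :=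
  if koThreshold q (update w j |w j|) ≤ (|w j| : ℝ) then
    (1 + #{k ∈ H0.erase j | koThreshold q (update w j |w j|) ≤ (-w k : ℝ)} : ℝ)⁻¹
  else 0

noncomputable def koLooPos (j : Fin p) (w : Fin p → ℝ) : ℝ :=
  if 0 < w j then koLooWeight H0 q j w else 0

lemma pos_of_mem_koCandidates {w : Fin p → ℝ} {t : ℝ} (ht : t ∈ koCandidates q w) :
    0 < t := by
  simp only [koCandidates, mem_filter, mem_image, mem_univ, true_and] at ht
  obtain ⟨⟨j, hj, rfl⟩, -⟩ := ht
  exact abs_pos.mpr hj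

lemma koThreshold_le_coe_iff {w : Fin p → ℝ} {x : ℝ} :
    koThreshold q w ≤ x ↔ ∃ t ∈ koCandidates q w, t ≤ x := by
  simp [koThreshold, Finset.min, Finset.inf_le_iff (WithTop.coe_lt_top x)]

lemma pos_of_koThreshold_le {w : Fin p → ℝ} {x : ℝ} (h : koThreshold q w ≤ x) : 0 < x := by
  obtain ⟨t, ht, htx⟩ := (koThreshold_le_coe_iff q).1 h
  exact (pos_of_mem_koCandidates q ht).trans_le htx

lemma koSelect_eq_filter (w : Fin p → ℝ) :
    koSelect q w = ({j | koThreshold q w ≤ w j} : Finset (Fin p)) := by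
  unfold koSelect
  split_ifs with h
  · simp_rw [koThreshold, ← coe_min' h, WithTop.coe_le_coe]
  · simp [koThreshold, not_nonempty_iff_eq_empty.1 h]

lemma koFDP_nonneg (w : Fin p → ℝ) : 0 ≤ koFDP H0 q w := by
  unfold koFDP
  positivity

lemma koFDP_le_mul_nullRatio (w : Fin p → ℝ) :
    koFDP H0 q w ≤ q * (#{j ∈ H0 | koThreshold q w ≤ w j} /
      (1 + #{j ∈ H0 | koThreshold q w ≤ (-w j : ℝ)}) : ℝ) := by
  have hsel : ({j | koThreshold q w ≤ w j} : Finset (Fin p)) ∩ H0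
      = {j ∈ H0 | koThreshold q w ≤ w j} := by
    ext; simp [and_comm]
  rw [koFDP, koSelect_eq_filter, hsel]
  cases hτ : koThreshold q w with
  | top => simp
  | coe t =>
    have hratio := (mem_filter.1 (mem_of_min hτ)).2
    simp only [WithTop.coe_le_coe] at hratio ⊢
    have hneg : #{j ∈ H0 | t ≤ -w j} ≤ #{j | w j ≤ -t} :=
      card_le_card fun j hj => by simp_all [le_neg]
    calc (#{j ∈ H0 | t ≤ w j} / max (#{j | t ≤ w j} : ℝ) 1 : ℝ)
        = #{j ∈ H0 | t ≤ w j} / (1 + #{j | w j ≤ -t}) *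
            ((1 + #{j | w j ≤ -t}) / max (#{j | t ≤ w j} : ℝ) 1) := by
          field_simp
      _ ≤ #{j ∈ H0 | t ≤ w j} / (1 + #{j ∈ H0 | t ≤ -w j}) * q := by
          gcongr
      _ = _ := mul_comm _ _

lemma nullRatio_eq_sum_koLooPos (w : Fin p → ℝ) :
    (#{j ∈ H0 | koThreshold q w ≤ w j} / (1 + #{j ∈ H0 | koThreshold q w ≤ (-w j : ℝ)}) : ℝ)
      = ∑ j ∈ H0, koLooPos H0 q j w := by
  rw [div_eq_mul_inv, card_filter, Nat.cast_sum, sum_mul]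
  refine sum_congr rfl fun j _ => ?_
  by_cases hwj : 0 < w j
  · have hupd : update w j |w j| = w := by rw [abs_of_pos hwj, update_eq_self]
    have herase : {k ∈ H0.erase j | koThreshold q w ≤ (-w k : ℝ)}
        = {k ∈ H0 | koThreshold q w ≤ (-w k : ℝ)} := by
      rw [filter_erase, erase_eq_of_notMem]
      exact fun h => (pos_of_koThreshold_le q (mem_filter.1 h).2).not_ge (by linarith)
    rw [koLooPos, if_pos hwj, koLooWeight, hupd, herase, abs_of_pos hwj]
    split_ifs <;> simp
  · have : ¬ koThreshold q w ≤ w j := fun h => hwj (pos_of_koThreshold_le q h)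
    simp [koLooPos, hwj, this]

lemma koLooWeight_update_neg (j : Fin p) (w : Fin p → ℝ) :
    koLooWeight H0 q j (update w j (-w j)) = koLooWeight H0 q j w := by
  have hfilter : ∀ τ : WithTop ℝ, {k ∈ H0.erase j | τ ≤ (-update w j (-w j) k : ℝ)}
      = {k ∈ H0.erase j | τ ≤ (-w k : ℝ)} :=
    fun τ => filter_congr fun k hk => by rw [update_of_ne (ne_of_mem_erase hk)]
  simp only [koLooWeight, update_self, abs_neg, update_idem, hfilter]

lemma koFDP_le_sum_koLooPos (w : Fin p → ℝ) :
    koFDP H0 q w ≤ q * ∑ j ∈ H0, koLooPos H0 q j w :=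
  (koFDP_le_mul_nullRatio H0 q w).trans_eq (by rw [nullRatio_eq_sum_koLooPos])

lemma koLooPos_update_neg (j : Fin p) (w : Fin p → ℝ) :
    koLooPos H0 q j (update w j (-w j)) = if w j < 0 then koLooWeight H0 q j w else 0 := by
  simp only [koLooPos, koLooWeight_update_neg, update_self, neg_pos]

lemma abs_koLooPos_le_one (j : Fin p) (w : Fin p → ℝ) : |koLooPos H0 q j w| ≤ 1 := by
  unfold koLooPos koLooWeight
  split_ifs
  · rw [abs_of_nonneg (by positivity)]
    exact inv_le_one_of_one_le₀ (by simp)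
  all_goals simp

lemma mem_koCandidates_congr {u v : Fin p → ℝ} (habs : ∀ i, |u i| = |v i|) {t : ℝ}
    (hneg : #{i | u i ≤ -t} = #{i | v i ≤ -t}) (hpos : #{i | t ≤ u i} = #{i | t ≤ v i}) :
    t ∈ koCandidates q u ↔ t ∈ koCandidates q v := by
  simp only [koCandidates, mem_filter, mem_image, mem_univ, true_and, ← abs_pos, habs, hneg,
    hpos]

lemma card_filter_update_abs_comm {w : Fin p → ℝ} {j k : Fin p} {P : ℝ → Prop}
    (h : P (w j) ↔ P (w k)) (habs : P |w j| ↔ P |w k|) :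
    #{i | P (update w j |w j| i)} = #{i | P (update w k |w k| i)} := by
  refine card_equiv (Equiv.swap j k) fun i => ?_
  rcases eq_or_ne i j with rfl | hij
  · simp [habs]
  rcases eq_or_ne i k with rfl | hik
  · simp [hij.symm, update_of_ne hij, h]
  simp [hij, hik, Equiv.swap_apply_of_ne_of_ne]

lemma mem_koCandidates_update_abs {w : Fin p → ℝ} {j k : Fin p} (hj : w j < 0) (hk : w k < 0)
    {t : ℝ} (htj : t ≤ |w j|) (htk : t ≤ |w k|) (ht : t ∈ koCandidates q (update w k |w k|)) :
    t ∈ koCandidates q (update w j |w j|) := by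
  have ht0 := pos_of_mem_koCandidates q ht
  have habs : ∀ (l i : Fin p), |update w l |w l| i| = |w i| := fun l i => by
    rcases eq_or_ne i l with rfl | hil <;> simp [*]
  refine (mem_koCandidates_congr q (fun i => by rw [habs, habs]) ?_ ?_).2 ht
  · refine card_filter_update_abs_comm (P := (· ≤ -t)) ?_ ?_ <;>
      constructor <;> intro <;> linarith [abs_of_neg hj, abs_of_neg hk]
  · refine card_filter_update_abs_comm (P := (t ≤ ·)) ?_ ?_ <;>
      constructor <;> intro <;> linarith [abs_of_neg hj, abs_of_neg hk]

lemma koThreshold_update_abs_le {w : Fin p → ℝ} {j k : Fin p} (hj : w j < 0) (hk : w k < 0)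
    (hkj : koThreshold q (update w k |w k|) ≤ (|w j| : ℝ))
    (hkk : koThreshold q (update w k |w k|) ≤ (|w k| : ℝ)) :
    koThreshold q (update w j |w j|) ≤ koThreshold q (update w k |w k|) := by
  obtain ⟨t, ht⟩ := WithTop.ne_top_iff_exists.1 (ne_top_of_le_ne_top WithTop.coe_ne_top hkj)
  rw [← ht] at hkj hkk ⊢
  exact min_le (mem_koCandidates_update_abs q hj hk (WithTop.coe_le_coe.1 hkj)
    (WithTop.coe_le_coe.1 hkk) (mem_of_min ht.symm))

lemma koThreshold_update_abs_eq {w : Fin p → ℝ} {j k : Fin p} (hj : w j < 0) (hk : w k < 0)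
    (hjj : koThreshold q (update w j |w j|) ≤ (|w j| : ℝ))
    (hkk : koThreshold q (update w k |w k|) ≤ (|w k| : ℝ)) :
    koThreshold q (update w j |w j|) = koThreshold q (update w k |w k|) := by
  wlog hjk : |w j| ≤ |w k| generalizing j k
  · exact (this hk hj hkk hjj (le_of_not_ge hjk)).symm
  have hkj := koThreshold_update_abs_le q hk hj (hjj.trans (by exact_mod_cast hjk)) hjj
  exact le_antisymm (koThreshold_update_abs_le q hj hk (hkj.trans hjj) hkk) hkj

lemma sum_koLooPos_update_neg_le_one (w : Fin p → ℝ) :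
    ∑ j ∈ H0, koLooPos H0 q j (update w j (-w j)) ≤ 1 := by
  simp only [koLooPos_update_neg]
  set τ : Fin p → WithTop ℝ := fun j => koThreshold q (update w j |w j|)
  set S := {j ∈ H0 | w j < 0 ∧ τ j ≤ (|w j| : ℝ)}
  have hsum : ∑ j ∈ H0, (if w j < 0 then koLooWeight H0 q j w else 0)
      = ∑ j ∈ S, (1 + #{k ∈ H0.erase j | τ j ≤ (-w k : ℝ)} : ℝ)⁻¹ := by
    simp only [S, sum_filter, koLooWeight, ite_and, τ]
  have hcard : ∀ j ∈ S, (#S : ℝ) ≤ 1 + #{k ∈ H0.erase j | τ j ≤ (-w k : ℝ)} := by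
    intro j hj
    obtain ⟨-, hj0, hjτ⟩ := mem_filter.1 hj
    have hsub : S.erase j ⊆ {k ∈ H0.erase j | τ j ≤ (-w k : ℝ)} := by
      intro k hk
      obtain ⟨hkj, hkS⟩ := mem_erase.1 hk
      obtain ⟨hkH, hk0, hkτ⟩ := mem_filter.1 hkS
      have hτ : τ j = τ k := koThreshold_update_abs_eq q hj0 hk0 hjτ hkτ
      rw [mem_filter, mem_erase, hτ, ← abs_of_neg hk0]
      exact ⟨⟨hkj, hkH⟩, hkτ⟩
    have := card_le_card hsub
    rw [card_erase_of_mem hj] at this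
    exact_mod_cast (by omega : #S ≤ 1 + #{k ∈ H0.erase j | τ j ≤ (-w k : ℝ)})
  calc _ = ∑ j ∈ S, (1 + #{k ∈ H0.erase j | τ j ≤ (-w k : ℝ)} : ℝ)⁻¹ := hsum
    _ ≤ ∑ j ∈ S, (#S : ℝ)⁻¹ :=
      sum_le_sum fun j hj => inv_anti₀ (by exact_mod_cast card_pos.2 ⟨j, hj⟩) (hcard j hj)
    _ ≤ 1 := by
      rw [sum_const, nsmul_eq_mul, ← div_eq_mul_inv]
      exact div_self_le_one _

end Deterministic

section Measurability

variable {X : Type*} [MeasurableSpace X] {p : ℕ} (q : ℝ)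

lemma measurable_card_filter {ι : Type*} (s : Finset ι) {P : X → ι → Prop}
    [∀ x, DecidablePred (P x)] (hP : ∀ i, MeasurableSet {x | P x i}) :
    Measurable fun x => (#{i ∈ s | P x i} : ℝ) := by
  simp only [card_filter, Nat.cast_sum, Nat.cast_ite, Nat.cast_one, Nat.cast_zero]
  exact Finset.measurable_sum _ fun i _ => Measurable.ite (hP i) measurable_const measurable_const

lemma measurableSet_koThreshold_le {u : X → Fin p → ℝ} {f : X → ℝ} (hu : Measurable u)
    (hf : Measurable f) : MeasurableSet {x | koThreshold q (u x) ≤ f x} := by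
  have hcoord : ∀ i, Measurable fun x => u x i := fun i => (measurable_pi_apply i).comp hu
  simp only [koThreshold_le_coe_iff, koCandidates, mem_filter, mem_image, mem_univ, true_and,
    exists_exists_and_eq_and, and_assoc, Set.ofPred_exists]
  refine MeasurableSet.iUnion fun i => ?_
  have hratio : Measurable fun x => (1 + #{k | u x k ≤ -|u x i|} : ℝ) /
      max (#{k | |u x i| ≤ u x k} : ℝ) 1 :=
    (measurable_const.add (measurable_card_filter _ fun k =>
      measurableSet_le (hcoord k) (hcoord i).abs.neg)).div
    ((measurable_card_filter _ fun k => measurableSet_le (hcoord i).abs (hcoord k)).max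
      measurable_const)
  exact ((hcoord i) (measurableSet_singleton 0).compl).inter
    ((measurableSet_le hratio measurable_const).inter (measurableSet_le (hcoord i).abs hf))

lemma measurable_koLooWeight (H0 : Finset (Fin p)) (j : Fin p) :
    Measurable (koLooWeight H0 q j) := by
  have hu : Measurable fun w : Fin p → ℝ => update w j |w j| := by fun_prop
  have hcount : Measurable fun w : Fin p → ℝ =>
      (#{k ∈ H0.erase j | koThreshold q (update w j |w j|) ≤ (-w k : ℝ)} : ℝ) :=
    measurable_card_filter _ fun k =>
      measurableSet_koThreshold_le q hu (measurable_pi_apply k).neg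
  exact Measurable.ite (measurableSet_koThreshold_le q hu (measurable_pi_apply j).abs)
    (measurable_const.add hcount).inv measurable_const

lemma measurable_koLooPos (H0 : Finset (Fin p)) (j : Fin p) : Measurable (koLooPos H0 q j) :=
  Measurable.ite (measurableSet_lt measurable_const (measurable_pi_apply j))
    (measurable_koLooWeight q H0 j) measurable_const

lemma integrable_koLooPos_comp {μ : Measure X} [IsFiniteMeasure μ] (H0 : Finset (Fin p))
    (j : Fin p) {Y : X → Fin p → ℝ} (hY : AEMeasurable Y μ) :
    Integrable (fun x => koLooPos H0 q j (Y x)) μ :=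
  .of_bound ((measurable_koLooPos q H0 j).comp_aemeasurable hY).aestronglyMeasurable 1
    (ae_of_all _ fun x => abs_koLooPos_le_one H0 q j (Y x))

end Measurability

lemma identDistrib_update_neg {Ω : Type*} [MeasurableSpace Ω] {μ : Measure Ω} {p : ℕ}
    {W : Ω → Fin p → ℝ} (hW : Measurable W) {H0 : Finset (Fin p)}
    (hsym : ∀ ε : Fin p → ℝ, (∀ j, ε j = 1 ∨ ε j = -1) → (∀ j ∉ H0, ε j = 1) →
      Measure.map (fun ω (j : Fin p) => ε j * W ω j) μ = Measure.map W μ)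
    {j : Fin p} (hj : j ∈ H0) :
    IdentDistrib (fun ω => update (W ω) j (-W ω j)) W μ μ := by
  have hε : (fun ω i => update (1 : Fin p → ℝ) j (-1) i * W ω i)
      = fun ω => update (W ω) j (-W ω j) := by
    funext ω i
    rcases eq_or_ne i j with rfl | h <;> simp [*]
  refine ⟨by fun_prop, hW.aemeasurable, ?_⟩
  rw [← hε]
  refine hsym _ (fun i => ?_) fun i hi => update_of_ne (ne_of_mem_of_not_mem hj hi).symm _ _
  rcases eq_or_ne i j with rfl | h <;> simp [*]

theorem knockoff_plus_fdr_control_general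
    {Ω : Type*} [MeasurableSpace Ω]
    (μ : MeasureTheory.Measure Ω) [MeasureTheory.IsProbabilityMeasure μ]
    (p : ℕ)
    (W : Ω → Fin p → ℝ) (hW : Measurable W)
    (H0 : Finset (Fin p))
    (q : ℝ) (hq0 : 0 < q)
    -- sign-flip symmetry on the nulls
    (hsym : ∀ ε : Fin p → ℝ, (∀ j, ε j = 1 ∨ ε j = -1) → (∀ j ∉ H0, ε j = 1) →
      MeasureTheory.Measure.map (fun ω (j : Fin p) => ε j * W ω j) μ =
        MeasureTheory.Measure.map W μ) :
    ∫ ω, koFDP H0 q (W ω) ∂μ ≤ q := by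
  have hflip : ∀ j ∈ H0, IdentDistrib (fun ω => update (W ω) j (-W ω j)) W μ μ :=
    fun j hj => identDistrib_update_neg hW hsym hj
  have hint : ∀ j, Integrable (fun ω => koLooPos H0 q j (W ω)) μ :=
    fun j => integrable_koLooPos_comp q H0 j hW.aemeasurable
  have hint_flip :
      ∀ j ∈ H0, Integrable (fun ω => koLooPos H0 q j (update (W ω) j (-W ω j))) μ :=
    fun j hj => integrable_koLooPos_comp q H0 j (hflip j hj).aemeasurable_fst
  calc ∫ ω, koFDP H0 q (W ω) ∂μ
      ≤ ∫ ω, q * ∑ j ∈ H0, koLooPos H0 q j (W ω) ∂μ :=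
        integral_mono_of_nonneg (ae_of_all _ fun ω => koFDP_nonneg H0 q _)
          ((integrable_finsetSum _ fun j _ => hint j).const_mul q)
          (ae_of_all _ fun ω => koFDP_le_sum_koLooPos H0 q (W ω))
    _ = q * ∑ j ∈ H0, ∫ ω, koLooPos H0 q j (update (W ω) j (-W ω j)) ∂μ := by
        rw [integral_const_mul, integral_finsetSum _ fun j _ => hint j]
        exact congrArg _ (sum_congr rfl fun j hj =>
          (((hflip j hj).comp (measurable_koLooPos q H0 j)).integral_eq).symm)
    _ = q * ∫ ω, ∑ j ∈ H0, koLooPos H0 q j (update (W ω) j (-W ω j)) ∂μ := by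
        rw [integral_finsetSum _ hint_flip]
    _ ≤ q * 1 := by
        refine mul_le_mul_of_nonneg_left ?_ hq0.le
        refine (integral_mono (integrable_finsetSum _ hint_flip) (integrable_const 1)
          fun ω => sum_koLooPos_update_neg_le_one H0 q (W ω)).trans ?_
        simp
    _ = q := mul_one q

/-- **Knockoff+ FDR control under null sign-flip symmetry (core of Lemma 1).** If flipping the
signs of the null coordinates of the score vector `W` arbitrarily leaves its joint distribution
unchanged, then the knockoff+ filter at level `q` controls the FDR at level `q`. -/
theorem knockoff_plus_fdr_control
    {Ω : Type*} [MeasurableSpace Ω]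
    (μ : MeasureTheory.Measure Ω) [MeasureTheory.IsProbabilityMeasure μ]
    (p : ℕ) (hp : 1 ≤ p)
    (W : Ω → Fin p → ℝ) (hW : Measurable W)
    (H0 : Finset (Fin p))
    (q : ℝ) (hq0 : 0 < q) (hq1 : q ≤ 1)
    -- sign-flip symmetry on the nulls
    (hsym : ∀ ε : Fin p → ℝ, (∀ j, ε j = 1 ∨ ε j = -1) → (∀ j ∉ H0, ε j = 1) →
      MeasureTheory.Measure.map (fun ω (j : Fin p) => ε j * W ω j) μ =
        MeasureTheory.Measure.map W μ) :
    ∫ ω, koFDP H0 q (W ω) ∂μ ≤ q :=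
  knockoff_plus_fdr_control_general μ p W hW H0 q hq0 hsym
end

section
/- Work in the discrete setting. Let X = (X_1, …, X_p) and X̃ = (X̃_1, …, X̃_p) be random vectors taking values in a common finite product type ∏_j 𝒳_j, let Y take values in a finite type, and let H₀ ⊆ {1, …, p}. For A ⊆ {1, …, p}, define swap_A(x, x̃) to be the pair obtained from (x, x̃) by exchanging x_j and x̃_j for every j ∈ A. Assume that for every A ⊆ H₀ and every y with P(Y = y) > 0, the conditional joint pmf of (X, X̃) given Y = y is invariant under swap_A. Let w be a function mapping (x, x̃, y) to a vector in ℝ^p that is antisymmetric under swaps: for every A ⊆ {1,…,p}, w(swap_A(x, x̃), y)_j = −w(x, x̃, y)_j for j ∈ A and w(swap_A(x, x̃), y)_j = w(x, x̃, y)_j for j ∉ A. Set W = w(X, X̃, Y). Then for every ε : {1,…,p} → {−1, +1} with ε_j = +1 for all j ∉ H₀, the random vector (ε_j W_j)_j has the same distribution as W, and moreover this equality of distributions holds conditionally on each value of Y with positive probability. -/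
open scoped Classical

/-- **Sign-flip symmetry of null knockoff scores (intermediate step of Lemma 1).** If the
conditional-on-`Y` joint pmf of `(X, X̃)` is invariant under swapping any subset of null
coordinates between `X` and `X̃`, and the score function `w` is antisymmetric under swaps,
then flipping the signs of the null coordinates of `W = w(X, X̃, Y)` leaves its distribution
unchanged, both unconditionally and conditionally on each value of `Y` with positive
probability. -/
theorem null_scores_sign_flip_symmetry
    {p : ℕ} {𝒳 : Fin p → Type*} [∀ j, Fintype (𝒳 j)] [∀ j, Nonempty (𝒳 j)]
    {𝒴 : Type*} [Fintype 𝒴] [Nonempty 𝒴]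
    -- joint pmf of (X, X̃, Y)
    (P : (∀ j, 𝒳 j) × (∀ j, 𝒳 j) × 𝒴 → ℝ)
    (hPnn : ∀ a, 0 ≤ P a)
    (hPsum : ∑ a, P a = 1)
    (H0 : Finset (Fin p))
    -- conditional-on-Y swap invariance: for every A ⊆ H₀ and every y with P(Y = y) > 0,
    -- the conditional joint pmf of (X, X̃) given Y = y is invariant under swap_A
    (hswap : ∀ A : Finset (Fin p), A ⊆ H0 →
      ∀ y : 𝒴, 0 < (∑ x, ∑ xt, P (x, xt, y)) →
      ∀ x xt : ∀ j, 𝒳 j,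
        P ((fun j => if j ∈ A then xt j else x j),
           (fun j => if j ∈ A then x j else xt j), y) /
            (∑ x', ∑ xt', P (x', xt', y)) =
          P (x, xt, y) / (∑ x', ∑ xt', P (x', xt', y)))
    -- antisymmetric score function
    (w : (∀ j, 𝒳 j) → (∀ j, 𝒳 j) → 𝒴 → Fin p → ℝ)
    (hanti : ∀ (A : Finset (Fin p)) (x xt : ∀ j, 𝒳 j) (y : 𝒴) (j : Fin p),
      w (fun j' => if j' ∈ A then xt j' else x j')
          (fun j' => if j' ∈ A then x j' else xt j') y j =
        if j ∈ A then -(w x xt y j) else w x xt y j)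
    -- sign flips equal to +1 off the nulls
    (ε : Fin p → ℝ)
    (hε1 : ∀ j, ε j = 1 ∨ ε j = -1)
    (hε0 : ∀ j ∉ H0, ε j = 1) :
    -- (ε_j W_j)_j has the same distribution as W = w(X, X̃, Y) …
    (∀ v : Fin p → ℝ,
      (∑ ω ∈ Finset.univ.filter
          (fun ω : (∀ j, 𝒳 j) × (∀ j, 𝒳 j) × 𝒴 =>
            (fun j => ε j * w ω.1 ω.2.1 ω.2.2 j) = v), P ω) =
        ∑ ω ∈ Finset.univ.filter
          (fun ω : (∀ j, 𝒳 j) × (∀ j, 𝒳 j) × 𝒴 =>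
            w ω.1 ω.2.1 ω.2.2 = v), P ω) ∧
    -- … and the equality of distributions holds conditionally on each value of Y
    -- with positive probability
    (∀ y : 𝒴, 0 < (∑ x, ∑ xt, P (x, xt, y)) →
      ∀ v : Fin p → ℝ,
        (∑ z ∈ Finset.univ.filter
            (fun z : (∀ j, 𝒳 j) × (∀ j, 𝒳 j) =>
              (fun j => ε j * w z.1 z.2 y j) = v), P (z.1, z.2, y)) /
              (∑ x, ∑ xt, P (x, xt, y)) =
          (∑ z ∈ Finset.univ.filter
              (fun z : (∀ j, 𝒳 j) × (∀ j, 𝒳 j) =>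
                w z.1 z.2 y = v), P (z.1, z.2, y)) /
              (∑ x, ∑ xt, P (x, xt, y))) := by
  classical
  set A : Finset (Fin p) := H0.filter (fun j => ε j = -1) with hA
  have hAH0 : A ⊆ H0 := Finset.filter_subset _ _
  set σ : ((∀ j, 𝒳 j) × (∀ j, 𝒳 j)) → ((∀ j, 𝒳 j) × (∀ j, 𝒳 j)) :=
    fun z => ((fun j => if j ∈ A then z.2 j else z.1 j),
              (fun j => if j ∈ A then z.1 j else z.2 j)) with hσ
  have hσσ : ∀ z, σ (σ z) = z := by
    intro z
    simp only [hσ]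
    refine Prod.ext ?_ ?_ <;> funext j <;> by_cases h : j ∈ A <;> simp [h]
  have hεw : ∀ (z : ((∀ j, 𝒳 j) × (∀ j, 𝒳 j))) (y : 𝒴),
      (fun j => ε j * w z.1 z.2 y j) = w (σ z).1 (σ z).2 y := by
    intro z y
    funext j
    have h := hanti A z.1 z.2 y j
    simp only [hσ]
    rw [h]
    by_cases hj : j ∈ A
    · have : ε j = -1 := (Finset.mem_filter.mp hj).2
      simp [hj, this]
    · have hε : ε j = 1 := by
        by_cases hH : j ∈ H0
        · rcases hε1 j with h1 | h1
          · exact h1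
          · exact absurd (Finset.mem_filter.mpr ⟨hH, h1⟩) hj
        · exact hε0 j hH
      simp [hj, hε]
  have hPσ : ∀ (y : 𝒴) (z : ((∀ j, 𝒳 j) × (∀ j, 𝒳 j))),
      P ((σ z).1, (σ z).2, y) = P (z.1, z.2, y) := by
    intro y z
    by_cases hy : 0 < (∑ x, ∑ xt, P (x, xt, y))
    · have h := hswap A hAH0 y hy z.1 z.2
      have hS : (∑ x', ∑ xt', P (x', xt', y)) ≠ 0 := ne_of_gt hy
      rw [div_eq_div_iff hS hS] at h
      exact mul_right_cancel₀ hS h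
    · have hnn : 0 ≤ ∑ x, ∑ xt, P (x, xt, y) :=
        Finset.sum_nonneg fun _ _ => Finset.sum_nonneg fun _ _ => hPnn _
      have hS : (∑ x, ∑ xt, P (x, xt, y)) = 0 := le_antisymm (not_lt.mp hy) hnn
      have hzero : ∀ x xt : (∀ j, 𝒳 j), P (x, xt, y) = 0 := by
        intro x xt
        have h1 := (Finset.sum_eq_zero_iff_of_nonneg
          (fun x' _ => Finset.sum_nonneg fun _ _ => hPnn (x', _, y))).mp hS
        have h2 := (Finset.sum_eq_zero_iff_of_nonneg
          (fun xt' _ => hPnn (x, xt', y))).mp (h1 x (Finset.mem_univ _))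
        exact h2 xt (Finset.mem_univ _)
      rw [hzero, hzero]
  have hcore : ∀ (y : 𝒴) (v : Fin p → ℝ),
      (∑ z ∈ Finset.univ.filter
          (fun z : ((∀ j, 𝒳 j) × (∀ j, 𝒳 j)) =>
            (fun j => ε j * w z.1 z.2 y j) = v), P (z.1, z.2, y)) =
      ∑ z ∈ Finset.univ.filter
          (fun z : ((∀ j, 𝒳 j) × (∀ j, 𝒳 j)) => w z.1 z.2 y = v), P (z.1, z.2, y) := by
    intro y v
    refine Finset.sum_nbij' (fun z => σ z) (fun z => σ z) ?_ ?_ ?_ ?_ ?_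
    · intro z hz
      simp only [Finset.mem_filter, Finset.mem_univ, true_and] at hz ⊢
      show w (σ z).1 (σ z).2 y = v
      rw [← hεw z y]
      exact hz
    · intro z hz
      simp only [Finset.mem_filter, Finset.mem_univ, true_and] at hz ⊢
      show (fun j => ε j * w (σ z).1 (σ z).2 y j) = v
      rw [hεw (σ z) y, hσσ z]
      exact hz
    · intro z _; exact hσσ z
    · intro z _; exact hσσ z
    · intro z _
      exact (hPσ y z).symm
  constructor
  · intro v
    rw [Finset.sum_filter, Finset.sum_filter]
    calc (∑ ω : (∀ j, 𝒳 j) × (∀ j, 𝒳 j) × 𝒴,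
          if (fun j => ε j * w ω.1 ω.2.1 ω.2.2 j) = v then P ω else 0)
        = ∑ ω : (∀ j, 𝒳 j) × (∀ j, 𝒳 j) × 𝒴,
            (if w ((σ (ω.1, ω.2.1)).1) ((σ (ω.1, ω.2.1)).2) ω.2.2 = v then
              P ((σ (ω.1, ω.2.1)).1, (σ (ω.1, ω.2.1)).2, ω.2.2) else 0) := by
          refine Finset.sum_congr rfl fun ω _ => ?_
          rw [hεw (ω.1, ω.2.1) ω.2.2, hPσ]
      _ = ∑ ω : (∀ j, 𝒳 j) × (∀ j, 𝒳 j) × 𝒴,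
            (if w ω.1 ω.2.1 ω.2.2 = v then P ω else 0) := by
          refine Finset.sum_nbij'
            (fun ω => ((σ (ω.1, ω.2.1)).1, (σ (ω.1, ω.2.1)).2, ω.2.2))
            (fun ω => ((σ (ω.1, ω.2.1)).1, (σ (ω.1, ω.2.1)).2, ω.2.2))
            (fun _ _ => Finset.mem_univ _) (fun _ _ => Finset.mem_univ _)
            ?_ ?_ ?_
          · intro ω _
            show ((σ (σ (ω.1, ω.2.1))).1, (σ (σ (ω.1, ω.2.1))).2, ω.2.2) = ω
            rw [hσσ]
          · intro ω _
            show ((σ (σ (ω.1, ω.2.1))).1, (σ (σ (ω.1, ω.2.1))).2, ω.2.2) = ω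
            rw [hσσ]
          · intro ω _
            rfl
  · intro y hy v
    rw [hcore y v]
end
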